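/- As σ → 0 with |β₁| < δ fixed, the rejection probability P(|N(β₁,σ²)| < f_α(δ,σ)) converges to 1; as σ → 0 with |β₁| > δ fixed, it converges to 0. Hence the folded-normal equivalence test is consistent. -/

import Mathlib

open MeasureTheory ProbabilityTheory Filter

/-- Standard normal CDF. -/
noncomputable def Phi (t : ℝ) : ℝ := ((gaussianReal 0 1) (Set.Iic t)).toReal

/-!
For `c ≥ 0`, `P(|N(β, σ²)| < c) = Φ((c - β)/σ) - Φ((-c - β)/σ)`. The quantile condition forces
`(f_α(δ,σ) - δ)/σ` to stay bounded as `σ → 0⁺` (below, since `Φ` of it is at least `α`; above,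
since it is at most `α + Φ(-δ/σ)` and `Φ(-δ/σ) → 0`), so `f_α(δ,σ) → δ`. Then
`(±f_α(δ,σ) - β₁)/σ` tends to `±∞` according to the signs of `±δ - β₁`, and the two `Φ` terms
tend to `1` and `0` when `|β₁| < δ`, and to a common limit when `|β₁| > δ`.
-/

open Set Topology

lemma Phi_eq_cdf : Phi = cdf (gaussianReal 0 1) :=
  funext fun t => (cdf_eq_real _ t).symm

lemma monotone_Phi : Monotone Phi := Phi_eq_cdf ▸ monotone_cdf _

lemma tendsto_Phi_atTop : Tendsto Phi atTop (𝓝 1) := Phi_eq_cdf ▸ tendsto_cdf_atTop _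

lemma tendsto_Phi_atBot : Tendsto Phi atBot (𝓝 0) := Phi_eq_cdf ▸ tendsto_cdf_atBot _

lemma Phi_nonneg (x : ℝ) : 0 ≤ Phi x := Phi_eq_cdf ▸ cdf_nonneg _ x

lemma gaussianReal_Ioo_toReal {a b : ℝ} (hab : a ≤ b) :
    ((gaussianReal 0 1) (Ioo a b)).toReal = Phi b - Phi a := by
  have := nullSingletonClass_gaussianReal (μ := 0) one_ne_zero
  rw [measure_congr Ioo_ae_eq_Ioc, ← measure_cdf (gaussianReal 0 1), StieltjesFunction.measure_Ioc,
    ENNReal.toReal_ofReal (sub_nonneg.2 (monotone_cdf _ hab)), Phi_eq_cdf]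

lemma gaussianReal_eq_map_affine (β σ : ℝ) :
    gaussianReal β ⟨σ ^ 2, sq_nonneg σ⟩ = (gaussianReal 0 1).map (fun x => σ * x + β) := by
  calc gaussianReal β ⟨σ ^ 2, sq_nonneg σ⟩ = ((gaussianReal 0 1).map (σ * ·)).map (· + β) := by
        rw [gaussianReal_map_const_mul, gaussianReal_map_add_const, mul_zero, zero_add, mul_one]
        rfl
    _ = _ := Measure.map_map (measurable_add_const β) (measurable_const_mul σ)

lemma gaussianReal_abs_lt_toReal (β : ℝ) {σ c : ℝ} (hσ : 0 < σ) (hc : 0 ≤ c) :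
    ((gaussianReal β ⟨σ ^ 2, sq_nonneg σ⟩) {x : ℝ | |x| < c}).toReal
      = Phi ((c - β) / σ) - Phi ((-c - β) / σ) := by
  have hpre : (fun x => σ * x + β) ⁻¹' {x : ℝ | |x| < c} = Ioo ((-c - β) / σ) ((c - β) / σ) := by
    ext x
    simp only [mem_preimage, mem_ofPred_eq, abs_lt, mem_Ioo, div_lt_iff₀ hσ, lt_div_iff₀ hσ]
    constructor <;> rintro ⟨h₁, h₂⟩ <;> constructor <;> linarith
  rw [gaussianReal_eq_map_affine, Measure.map_apply (by fun_prop) (measurableSet_lt (by fun_prop) (by fun_prop)), hpre,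
    gaussianReal_Ioo_toReal (div_le_div_of_nonneg_right (by linarith) hσ.le)]

lemma tendsto_Phi_div_of_pos {g : ℝ → ℝ} {c : ℝ} (hg : Tendsto g (𝓝[>] 0) (𝓝 c)) (hc : 0 < c) :
    Tendsto (fun σ => Phi (g σ / σ)) (𝓝[>] 0) (𝓝 1) :=
  tendsto_Phi_atTop.comp (hg.pos_mul_atTop hc tendsto_inv_nhdsGT_zero)

lemma tendsto_Phi_div_of_neg {g : ℝ → ℝ} {c : ℝ} (hg : Tendsto g (𝓝[>] 0) (𝓝 c)) (hc : c < 0) :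
    Tendsto (fun σ => Phi (g σ / σ)) (𝓝[>] 0) (𝓝 0) :=
  tendsto_Phi_atBot.comp (hg.neg_mul_atTop hc tendsto_inv_nhdsGT_zero)

lemma pos_of_Phi_sub_pos {σ c δ : ℝ} (hσ : 0 < σ)
    (h : 0 < Phi ((c - δ) / σ) - Phi ((-c - δ) / σ)) : 0 < c := by
  have := monotone_Phi.reflect_lt (sub_pos.1 h)
  rw [div_lt_div_iff_of_pos_right hσ] at this
  linarith

lemma tendsto_foldedNormal_quantile {δ α : ℝ} {f : ℝ → ℝ} (hδ : 0 < δ) (hα : α ∈ Ioo (0 : ℝ) 1)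
    (hq : ∀ σ : ℝ, 0 < σ → Phi ((f σ - δ) / σ) - Phi ((-(f σ) - δ) / σ) = α) :
    Tendsto f (𝓝[>] 0) (𝓝 δ) := by
  obtain ⟨hα₀, hα₁⟩ := hα
  obtain ⟨a, ha⟩ : ∃ a, Phi a < α := (tendsto_Phi_atBot.eventually (gt_mem_nhds hα₀)).exists
  obtain ⟨b, hb⟩ : ∃ b, (1 + α) / 2 < Phi b :=
    (tendsto_Phi_atTop.eventually (lt_mem_nhds (by linarith))).exists
  have htail : ∀ᶠ σ in 𝓝[>] 0, Phi (-δ / σ) < (1 - α) / 2 :=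
    (tendsto_Phi_div_of_neg tendsto_const_nhds (neg_neg_of_pos hδ)).eventually
      (gt_mem_nhds (by linarith))
  have hbounds : ∀ᶠ σ in 𝓝[>] 0, δ + a * σ ≤ f σ ∧ f σ ≤ δ + b * σ := by
    filter_upwards [htail, self_mem_nhdsWithin] with σ hσtail (hσ : 0 < σ)
    have hqσ := hq σ hσ
    have hf : 0 < f σ := pos_of_Phi_sub_pos hσ (hqσ ▸ hα₀)
    have hlow : a < (f σ - δ) / σ :=
      monotone_Phi.reflect_lt (by linarith [Phi_nonneg ((-(f σ) - δ) / σ)])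
    have hneg : Phi ((-(f σ) - δ) / σ) ≤ Phi (-δ / σ) :=
      monotone_Phi (div_le_div_of_nonneg_right (by linarith) hσ.le)
    have hup : (f σ - δ) / σ < b := monotone_Phi.reflect_lt (by linarith)
    rw [lt_div_iff₀ hσ] at hlow
    rw [div_lt_iff₀ hσ] at hup
    constructor <;> linarith
  have hline : ∀ k : ℝ, Tendsto (fun σ => δ + k * σ) (𝓝[>] 0) (𝓝 δ) := fun k =>
    tendsto_nhdsWithin_of_tendsto_nhds
      ((by fun_prop : Continuous fun σ : ℝ => δ + k * σ).tendsto' 0 δ (by simp))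
  exact tendsto_of_tendsto_of_tendsto_of_le_of_le' (hline a) (hline b)
    (hbounds.mono fun _ h => h.1) (hbounds.mono fun _ h => h.2)

/-- Consistency of the folded-normal equivalence test: with `f_α(δ,σ)` the `α`-quantile
of the folded normal with mean `δ > 0` and standard deviation `σ`, the rejection
probability `P(|N(β₁,σ²)| < f_α(δ,σ))` tends to `1` as `σ → 0⁺` when `|β₁| < δ`, and
tends to `0` when `|β₁| > δ`. -/
theorem foldedNormal_test_consistent (δ α β₁ : ℝ) (hδ : 0 < δ)
    (hα : α ∈ Set.Ioo (0 : ℝ) 1) (fα : ℝ → ℝ)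
    (hq : ∀ σ : ℝ, 0 < σ → Phi ((fα σ - δ) / σ) - Phi ((-(fα σ) - δ) / σ) = α) :
    (|β₁| < δ →
      Tendsto (fun σ : ℝ =>
          ((gaussianReal β₁ ⟨σ ^ 2, sq_nonneg σ⟩) {x : ℝ | |x| < fα σ}).toReal)
        (nhdsWithin 0 (Set.Ioi 0)) (nhds 1)) ∧
    (δ < |β₁| →
      Tendsto (fun σ : ℝ =>
          ((gaussianReal β₁ ⟨σ ^ 2, sq_nonneg σ⟩) {x : ℝ | |x| < fα σ}).toReal)
        (nhdsWithin 0 (Set.Ioi 0)) (nhds 0)) := by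
  have hf := tendsto_foldedNormal_quantile hδ hα hq
  have hprob : ∀ᶠ σ in 𝓝[>] 0, Phi ((fα σ - β₁) / σ) - Phi ((-(fα σ) - β₁) / σ)
      = ((gaussianReal β₁ ⟨σ ^ 2, sq_nonneg σ⟩) {x : ℝ | |x| < fα σ}).toReal := by
    filter_upwards [hf.eventually (lt_mem_nhds hδ), self_mem_nhdsWithin] with σ hfσ (hσ : 0 < σ)
    exact (gaussianReal_abs_lt_toReal β₁ hσ hfσ.le).symm
  have hupper := hf.sub_const β₁
  have hlower := hf.neg.sub_const β₁
  refine ⟨fun hβ => ?_, fun hβ => ?_⟩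
  · rw [abs_lt] at hβ
    simpa using ((tendsto_Phi_div_of_pos hupper (by linarith)).sub
      (tendsto_Phi_div_of_neg hlower (by linarith))).congr' hprob
  · rcases lt_abs.1 hβ with hβ | hβ
    · simpa using ((tendsto_Phi_div_of_neg hupper (by linarith)).sub
        (tendsto_Phi_div_of_neg hlower (by linarith))).congr' hprob
    · simpa using ((tendsto_Phi_div_of_pos hupper (by linarith)).sub
        (tendsto_Phi_div_of_pos hlower (by linarith))).congr' hprob
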